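/- arXiv:1611.04906 — 2 statements merged into one kernel-verified Lean document; each statement's English description precedes it below -/
import Mathlib

section
/- Let G = (V, ω) be a finite weighted graph with vertex measure μ, let h, f : V → ℝ with f_i > 0 for all i, and let α ≥ p > 1. Let φ : V → ℝ with φ_i > 0 for all i, and let ϕ : V → ℝ be arbitrary. Then the function t ↦ I(φ + tϕ) is differentiable at t = 0 and d/dt|_{t=0} I(φ + tϕ) = −p (∫_V f φ^α dμ)^{−p/α} ∫_V (Δ_p φ + h φ^{p−1} − λ_φ f φ^{α−1}) ϕ dμ, where λ_φ = −(∫_E |∇φ|^p dω − ∫_V h φ^p dμ)/(∫_V f φ^α dμ). -/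
/-!
Along the line `φ + tϕ` the energy is `N(t) · D(t)^{-p/α}`, and every term of `N` and `D` is a
power of an affine function of `t`, differentiable at `0` because `φ > 0` and `|·|^p` is `C¹` for
`p > 1`. Summation by parts over the symmetric weights turns the derivative of the gradient
energy into `-p ∫_V (Δ_p φ) ϕ dμ`; the product and chain rules do the rest.
-/

open Finset

/-- The gradient energy `∫_E |∇φ|^p dω = (1/2) ∑_{i,j} ω_ij |φ_j − φ_i|^p`. -/
noncomputable def gradEnergy {V : Type*} [Fintype V] (ω : V → V → ℝ) (p : ℝ)
    (φ : V → ℝ) : ℝ :=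
  (1 / 2) * ∑ i, ∑ j, ω i j * |φ j - φ i| ^ p

/-- The energy functional
`I(φ) = (∫_E |∇φ|^p dω − ∫_V h φ^p dμ) (∫_V f φ^α dμ)^{−p/α}`. -/
noncomputable def energy {V : Type*} [Fintype V] (μ : V → ℝ) (ω : V → V → ℝ)
    (h f : V → ℝ) (p α : ℝ) (φ : V → ℝ) : ℝ :=
  (gradEnergy ω p φ - ∑ i, μ i * (h i * φ i ^ p)) *
    (∑ i, μ i * (f i * φ i ^ α)) ^ (-(p / α))

/-- The discrete `p`-Laplacian on a finite weighted graph: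
`(Δ_p φ)_i = (1/μ_i) ∑_j ω_ij |φ_j − φ_i|^{p−2} (φ_j − φ_i)`. -/
noncomputable def pLaplacian {V : Type*} [Fintype V] (μ : V → ℝ) (ω : V → V → ℝ)
    (p : ℝ) (φ : V → ℝ) (i : V) : ℝ :=
  (1 / μ i) * ∑ j, ω i j * |φ j - φ i| ^ (p - 2) * (φ j - φ i)

lemma hasDerivAt_add_mul_rpow {c : ℝ} (hc : 0 < c) (d q : ℝ) :
    HasDerivAt (fun t : ℝ => (c + t * d) ^ q) (q * c ^ (q - 1) * d) 0 := by
  have := ((hasDerivAt_mul_const (x := 0) d).const_add c).rpow_const (p := q)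
    (Or.inl (by simpa using hc.ne'))
  simp only [zero_mul, add_zero] at this
  exact this.congr_deriv (by ring)

lemma hasDerivAt_abs_add_mul_rpow {q : ℝ} (hq : 1 < q) (c d : ℝ) :
    HasDerivAt (fun t : ℝ => |c + t * d| ^ q) (q * |c| ^ (q - 2) * c * d) 0 := by
  have := (hasDerivAt_abs_rpow (c + 0 * d) hq).comp 0 ((hasDerivAt_mul_const d).const_add c)
  simpa [Function.comp_def, mul_assoc] using this

lemma HasDerivAt.mul_rpow_const {A C : ℝ → ℝ} {A' C' x : ℝ} (hA : HasDerivAt A A' x)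
    (hC : HasDerivAt C C' x) (hCx : C x ≠ 0) (r : ℝ) :
    HasDerivAt (fun t => A t * C t ^ r) (C x ^ r * (A' + r * A x / C x * C')) x := by
  refine (hA.mul (hC.rpow_const (Or.inl hCx))).congr_deriv ?_
  rw [Real.rpow_sub_one hCx]
  field_simp

lemma hasDerivAt_sum_mul_rpow {V : Type*} [Fintype V] (μ g : V → ℝ) {φ : V → ℝ}
    (hφ : ∀ i, 0 < φ i) (ϕ : V → ℝ) (q : ℝ) :
    HasDerivAt (fun t : ℝ => ∑ i, μ i * (g i * (φ i + t * ϕ i) ^ q))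
      (q * ∑ i, μ i * (g i * φ i ^ (q - 1) * ϕ i)) 0 := by
  rw [mul_sum]
  refine HasDerivAt.fun_sum fun i _ => ?_
  exact (((hasDerivAt_add_mul_rpow (hφ i) (ϕ i) q).const_mul (g i)).const_mul (μ i)).congr_deriv
    (by ring)

lemma sum_sum_mul_sub_of_antisymm {V : Type*} [Fintype V] {g : V → V → ℝ}
    (hg : ∀ i j, g j i = -g i j) (ϕ : V → ℝ) :
    ∑ i, ∑ j, g i j * (ϕ j - ϕ i) = -2 * ∑ i, ∑ j, g i j * ϕ i := by
  have hswap : ∑ i, ∑ j, g i j * ϕ j = -∑ i, ∑ j, g i j * ϕ i := by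
    rw [sum_comm, ← sum_neg_distrib]
    exact sum_congr rfl fun i _ => by
      rw [← sum_neg_distrib]; exact sum_congr rfl fun j _ => by rw [hg]; ring
  simp only [mul_sub, sum_sub_distrib, hswap]
  ring

lemma hasDerivAt_gradEnergy {V : Type*} [Fintype V] (ω : V → V → ℝ) {p : ℝ} (hp : 1 < p)
    (φ ϕ : V → ℝ) :
    HasDerivAt (fun t : ℝ => gradEnergy ω p (fun i => φ i + t * ϕ i))
      (p / 2 * ∑ i, ∑ j, ω i j * |φ j - φ i| ^ (p - 2) * (φ j - φ i) * (ϕ j - ϕ i)) 0 := by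
  have hterm : ∀ i j, HasDerivAt (fun t : ℝ => ω i j * |φ j + t * ϕ j - (φ i + t * ϕ i)| ^ p)
      (ω i j * (p * |φ j - φ i| ^ (p - 2) * (φ j - φ i) * (ϕ j - ϕ i))) 0 := fun i j => by
    simp_rw [show ∀ t : ℝ, φ j + t * ϕ j - (φ i + t * ϕ i) = φ j - φ i + t * (ϕ j - ϕ i) from
      fun t => by ring]
    exact (hasDerivAt_abs_add_mul_rpow hp (φ j - φ i) (ϕ j - ϕ i)).const_mul (ω i j)
  refine ((HasDerivAt.fun_sum fun i _ => HasDerivAt.fun_sum fun j _ => hterm i j).const_mul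
    (1 / 2)).congr_deriv ?_
  simp only [mul_sum]
  exact sum_congr rfl fun i _ => sum_congr rfl fun j _ => by ring

/-- Discrete Green's formula; symmetry of `ω` makes the edge flux antisymmetric. -/
lemma sum_mul_pLaplacian_mul {V : Type*} [Fintype V] {μ : V → ℝ} (hμ : ∀ i, μ i ≠ 0)
    {ω : V → V → ℝ} (hω : ∀ i j, ω i j = ω j i) (p : ℝ) (φ ϕ : V → ℝ) :
    ∑ i, μ i * (pLaplacian μ ω p φ i * ϕ i)
      = -(1 / 2) * ∑ i, ∑ j, ω i j * |φ j - φ i| ^ (p - 2) * (φ j - φ i) * (ϕ j - ϕ i) := by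
  rw [sum_sum_mul_sub_of_antisymm (fun i j => by rw [hω, abs_sub_comm]; ring)]
  refine (sum_congr rfl fun i _ => ?_).trans (by ring)
  rw [pLaplacian, ← sum_mul]
  field_simp [hμ i]

lemma hasDerivAt_gradEnergy_eq_pLaplacian {V : Type*} [Fintype V] {μ : V → ℝ}
    (hμ : ∀ i, μ i ≠ 0) {ω : V → V → ℝ} (hω : ∀ i j, ω i j = ω j i) {p : ℝ} (hp : 1 < p)
    (φ ϕ : V → ℝ) :
    HasDerivAt (fun t : ℝ => gradEnergy ω p (fun i => φ i + t * ϕ i))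
      (-p * ∑ i, μ i * (pLaplacian μ ω p φ i * ϕ i)) 0 := by
  refine (hasDerivAt_gradEnergy ω hp φ ϕ).congr_deriv ?_
  rw [sum_mul_pLaplacian_mul hμ hω]
  ring

theorem energy_euler_lagrange_derivative_general
    {V : Type*} [Fintype V] [Nonempty V]
    (μ : V → ℝ) (hμ : ∀ i, 0 < μ i)
    (ω : V → V → ℝ) (hωsym : ∀ i j, ω i j = ω j i)
    (h f : V → ℝ) (hf : ∀ i, 0 < f i)
    (p α : ℝ) (hp : 1 < p) (hpα : p ≤ α)
    (φ : V → ℝ) (hφpos : ∀ i, 0 < φ i) (ϕ : V → ℝ)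
    (lamφ : ℝ)
    (hlam : lamφ = -(gradEnergy ω p φ - ∑ i, μ i * (h i * φ i ^ p)) /
      (∑ i, μ i * (f i * φ i ^ α))) :
    HasDerivAt (fun t : ℝ => energy μ ω h f p α (fun i => φ i + t * ϕ i))
      (-p * (∑ i, μ i * (f i * φ i ^ α)) ^ (-(p / α)) *
        ∑ i, μ i * ((pLaplacian μ ω p φ i + h i * φ i ^ (p - 1) -
          lamφ * f i * φ i ^ (α - 1)) * ϕ i)) 0 := by
  have hS : 0 < ∑ i, μ i * (f i * φ i ^ α) :=
    sum_pos (fun i _ => mul_pos (hμ i) (mul_pos (hf i) (Real.rpow_pos_of_pos (hφpos i) α)))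
      univ_nonempty
  have hα : α ≠ 0 := by linarith
  have hderiv := ((hasDerivAt_gradEnergy_eq_pLaplacian (fun i => (hμ i).ne') hωsym hp φ ϕ).sub
    (hasDerivAt_sum_mul_rpow μ h hφpos ϕ p)).mul_rpow_const
    (hasDerivAt_sum_mul_rpow μ f hφpos ϕ α) (by simpa using hS.ne') (-(p / α))
  have hsplit : ∑ i, μ i * ((pLaplacian μ ω p φ i + h i * φ i ^ (p - 1) -
        lamφ * f i * φ i ^ (α - 1)) * ϕ i)
      = ∑ i, μ i * (pLaplacian μ ω p φ i * ϕ i) + ∑ i, μ i * (h i * φ i ^ (p - 1) * ϕ i)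
        - lamφ * ∑ i, μ i * (f i * φ i ^ (α - 1) * ϕ i) := by
    rw [mul_sum, ← sum_add_distrib, ← sum_sub_distrib]
    exact sum_congr rfl fun i _ => by ring
  refine hderiv.congr_deriv ?_
  simp only [Pi.sub_apply, zero_mul, add_zero]
  rw [hsplit, hlam]
  field_simp
  ring

/-- **Euler–Lagrange equation of the energy functional**: for `φ > 0` and any
direction `ϕ`, `t ↦ I(φ + tϕ)` is differentiable at `t = 0` with derivative
`−p (∫_V f φ^α dμ)^{−p/α} ∫_V (Δ_p φ + h φ^{p−1} − λ_φ f φ^{α−1}) ϕ dμ`,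
where `λ_φ = −(∫_E |∇φ|^p dω − ∫_V h φ^p dμ) / ∫_V f φ^α dμ`. -/
theorem energy_euler_lagrange_derivative
    {V : Type*} [Fintype V] [Nonempty V]
    (μ : V → ℝ) (hμ : ∀ i, 0 < μ i)
    (ω : V → V → ℝ) (hωsym : ∀ i j, ω i j = ω j i)
    (hωnonneg : ∀ i j, 0 ≤ ω i j) (hωloop : ∀ i, ω i i = 0)
    (h f : V → ℝ) (hf : ∀ i, 0 < f i)
    (p α : ℝ) (hp : 1 < p) (hpα : p ≤ α)
    (φ : V → ℝ) (hφpos : ∀ i, 0 < φ i) (ϕ : V → ℝ)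
    (lamφ : ℝ)
    (hlam : lamφ = -(gradEnergy ω p φ - ∑ i, μ i * (h i * φ i ^ p)) /
      (∑ i, μ i * (f i * φ i ^ α))) :
    HasDerivAt (fun t : ℝ => energy μ ω h f p α (fun i => φ i + t * ϕ i))
      (-p * (∑ i, μ i * (f i * φ i ^ α)) ^ (-(p / α)) *
        ∑ i, μ i * ((pLaplacian μ ω p φ i + h i * φ i ^ (p - 1) -
          lamφ * f i * φ i ^ (α - 1)) * ϕ i)) 0 :=
  energy_euler_lagrange_derivative_general μ hμ ω hωsym h f hf p α hp hpα φ hφpos ϕ lamφ hlam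
end

section
/- Let G = (V, ω) be a finite connected weighted graph with vertex measure μ, let h, f : V → ℝ with f_i > 0 for all i, and let α ≥ p > 1. Set β = inf{I(φ) : φ ≥ 0, φ ≢ 0}. Then there exists φ̂ : V → ℝ with φ̂_i > 0 for all i ∈ V, ∫_V f φ̂^α dμ = 1, and (Δ_p φ̂)_i + h_i φ̂_i^{p−1} = −β · f_i φ̂_i^{α−1} for every i ∈ V; i.e. the constant λ in the p-th Yamabe equation can be taken to be −β for a normalized minimizer. -/
/-!
The energy is invariant under positive scaling, so `β` is the minimum of the continuous
numerator `∫_E |∇φ|^p dω - ∫_V h φ^p dμ` over the compact set `{φ ≥ 0, ∫_V f φ^α dμ = 1}`;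
let `φ̂` be a minimizer. Moving `φ̂` along the `i`-th coordinate, the derivative of the energy is
`-p μ_i (Δ_p φ̂ + h φ̂^{p-1} + β f φ̂^{α-1})_i`. At a zero of `φ̂` only increases are admissible,
so this derivative is nonnegative, which forces every neighbour to vanish too; by connectedness
`φ̂` would vanish identically. Hence `φ̂ > 0`, the variation is two-sided, and the derivative
vanishes: this is the Yamabe equation with `λ = -β`.
-/

lemma HasDerivAt.nonneg_of_forall_gt_le {g : ℝ → ℝ} {c x : ℝ} (hg : HasDerivAt g c x)
    (hmin : ∀ t > x, g x ≤ g t) : 0 ≤ c := by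
  have hminOn : IsMinOn g (Set.Ici x) x := fun t ht => by
    rcases (Set.mem_Ici.1 ht : x ≤ t).eq_or_lt with rfl | hxt
    exacts [le_refl (g x), hmin t hxt]
  have hcone : (1 : ℝ) ∈ posTangentConeAt (Set.Ici x) x :=
    mem_posTangentConeAt_of_segment_subset (by
      rw [segment_eq_Icc (by linarith)]; exact Set.Icc_subset_Ici_self)
  simpa using hminOn.localize.hasFDerivWithinAt_nonneg hg.hasFDerivAt.hasFDerivWithinAt hcone

section

variable {V : Type*} [Fintype V]

noncomputable def powIntegral (μ f : V → ℝ) (q : ℝ) (φ : V → ℝ) : ℝ :=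
  ∑ i, μ i * (f i * φ i ^ q)

noncomputable def energyNumerator (μ : V → ℝ) (ω : V → V → ℝ) (h : V → ℝ) (p : ℝ)
    (φ : V → ℝ) : ℝ :=
  gradEnergy ω p φ - powIntegral μ h p φ

def normalizedNonneg (μ f : V → ℝ) (α : ℝ) : Set (V → ℝ) :=
  {φ | (∀ i, 0 ≤ φ i) ∧ powIntegral μ f α φ = 1}

noncomputable def normalizeMass (μ f : V → ℝ) (α : ℝ) (φ : V → ℝ) : V → ℝ :=
  powIntegral μ f α φ ^ (-α⁻¹) • φ

def admissibleEnergies (μ : V → ℝ) (ω : V → V → ℝ) (h f : V → ℝ) (p α : ℝ) : Set ℝ :=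
  {y | ∃ φ : V → ℝ, (∀ i, 0 ≤ φ i) ∧ φ ≠ 0 ∧ energy μ ω h f p α φ = y}

variable {μ : V → ℝ} {ω : V → V → ℝ} {h f : V → ℝ} {p q α : ℝ} {φ : V → ℝ}

lemma energy_eq_energyNumerator_mul :
    energy μ ω h f p α φ = energyNumerator μ ω h p φ * powIntegral μ f α φ ^ (-(p / α)) :=
  rfl

lemma energy_eq_energyNumerator (hφ : powIntegral μ f α φ = 1) :
    energy μ ω h f p α φ = energyNumerator μ ω h p φ := by
  rw [energy_eq_energyNumerator_mul, hφ, Real.one_rpow, mul_one]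

lemma powIntegral_zero (hq : q ≠ 0) : powIntegral μ f q 0 = 0 := by
  simp [powIntegral, Real.zero_rpow hq]

lemma powIntegral_pos (hμ : ∀ i, 0 < μ i) (hf : ∀ i, 0 < f i) (hφ : ∀ i, 0 ≤ φ i)
    (hφ0 : φ ≠ 0) : 0 < powIntegral μ f q φ := by
  obtain ⟨k, hk⟩ := Function.ne_iff.1 hφ0
  have hφk : 0 < φ k := (hφ k).lt_of_ne' hk
  exact Finset.sum_pos'
    (fun j _ => mul_nonneg (hμ j).le (mul_nonneg (hf j).le (Real.rpow_nonneg (hφ j) q)))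
    ⟨k, Finset.mem_univ k, mul_pos (hμ k) (mul_pos (hf k) (Real.rpow_pos_of_pos hφk q))⟩

lemma powIntegral_smul {t : ℝ} (ht : 0 ≤ t) (hφ : ∀ i, 0 ≤ φ i) :
    powIntegral μ f q (t • φ) = t ^ q * powIntegral μ f q φ := by
  simp only [powIntegral, Pi.smul_apply, smul_eq_mul, Finset.mul_sum]
  exact Finset.sum_congr rfl fun j _ => by rw [Real.mul_rpow ht (hφ j)]; ring

lemma gradEnergy_smul {t : ℝ} (ht : 0 ≤ t) :
    gradEnergy ω p (t • φ) = t ^ p * gradEnergy ω p φ := by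
  simp only [gradEnergy, Pi.smul_apply, smul_eq_mul, ← mul_sub, abs_mul, abs_of_nonneg ht,
    Real.mul_rpow ht (abs_nonneg _), Finset.mul_sum]
  exact Finset.sum_congr rfl fun a _ => Finset.sum_congr rfl fun b _ => by ring

lemma energyNumerator_smul {t : ℝ} (ht : 0 ≤ t) (hφ : ∀ i, 0 ≤ φ i) :
    energyNumerator μ ω h p (t • φ) = t ^ p * energyNumerator μ ω h p φ := by
  rw [energyNumerator, energyNumerator, gradEnergy_smul ht, powIntegral_smul ht hφ, mul_sub]

lemma normalizeMass_mem_normalizedNonneg (hα : α ≠ 0) (hφ : ∀ i, 0 ≤ φ i)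
    (hD : 0 < powIntegral μ f α φ) : normalizeMass μ f α φ ∈ normalizedNonneg μ f α := by
  have ht : 0 < powIntegral μ f α φ ^ (-α⁻¹) := Real.rpow_pos_of_pos hD _
  refine ⟨fun i => mul_nonneg ht.le (hφ i), ?_⟩
  rw [normalizeMass, powIntegral_smul ht.le hφ, ← Real.rpow_mul hD.le, neg_mul,
    inv_mul_cancel₀ hα, Real.rpow_neg_one, inv_mul_cancel₀ hD.ne']

lemma energyNumerator_normalizeMass (hφ : ∀ i, 0 ≤ φ i) (hD : 0 < powIntegral μ f α φ) :
    energyNumerator μ ω h p (normalizeMass μ f α φ) = energy μ ω h f p α φ := by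
  rw [normalizeMass, energyNumerator_smul (Real.rpow_pos_of_pos hD _).le hφ,
    ← Real.rpow_mul hD.le, energy_eq_energyNumerator_mul, mul_comm]
  ring_nf

lemma continuous_powIntegral (hq : 0 ≤ q) : Continuous (powIntegral μ f q) := by
  unfold powIntegral
  fun_prop (disch := exact fun _ => Or.inr hq)

lemma continuous_energyNumerator (hp : 0 ≤ p) : Continuous (energyNumerator μ ω h p) := by
  unfold energyNumerator gradEnergy
  refine Continuous.sub ?_ (continuous_powIntegral hp)
  fun_prop (disch := exact fun _ => Or.inr hp)

lemma isCompact_normalizedNonneg (hμ : ∀ i, 0 < μ i) (hf : ∀ i, 0 < f i) (hα : 0 < α) :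
    IsCompact (normalizedNonneg μ f α) := by
  have hclosed : IsClosed (normalizedNonneg μ f α) := by
    simp only [normalizedNonneg, Set.ofPred_and, Set.ofPred_forall]
    exact (isClosed_iInter fun j => isClosed_le continuous_const (continuous_apply j)).inter
      (isClosed_singleton.preimage (continuous_powIntegral hα.le))
  refine (isCompact_univ_pi fun j => isCompact_Icc (a := 0)
    (b := (μ j * f j)⁻¹ ^ α⁻¹)).of_isClosed_subset hclosed ?_
  rintro φ ⟨hφ, hφD⟩ j -
  have hmf : 0 < μ j * f j := mul_pos (hμ j) (hf j)
  have hterm : μ j * (f j * φ j ^ α) ≤ 1 :=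
    hφD ▸ Finset.single_le_sum
      (fun k _ => mul_nonneg (hμ k).le (mul_nonneg (hf k).le (Real.rpow_nonneg (hφ k) α)))
      (Finset.mem_univ j)
  refine ⟨hφ j, (Real.le_rpow_inv_iff_of_pos (hφ j) (inv_nonneg.2 hmf.le) hα).2 ?_⟩
  rw [← one_div, le_div_iff₀ hmf]
  linarith

lemma normalizedNonneg_nonempty [Nonempty V] (hμ : ∀ i, 0 < μ i) (hf : ∀ i, 0 < f i)
    (hα : α ≠ 0) : (normalizedNonneg μ f α).Nonempty :=
  ⟨_, normalizeMass_mem_normalizedNonneg hα (fun _ => zero_le_one)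
    (powIntegral_pos hμ hf (fun _ => zero_le_one) one_ne_zero)⟩

/-- Discrete Green formula. -/
lemma sum_sum_mul_sub_of_antisymm_s12 (K : V → V → ℝ) (hK : ∀ a b, K b a = -K a b) (v : V → ℝ) :
    ∑ a, ∑ b, K a b * (v b - v a) = -2 * ∑ a, v a * ∑ b, K a b := by
  have hswap : ∑ a, ∑ b, K a b * v b = -∑ a, ∑ b, K a b * v a := by
    rw [Finset.sum_comm, ← Finset.sum_neg_distrib]
    exact Finset.sum_congr rfl fun a _ => by
      rw [← Finset.sum_neg_distrib]; exact Finset.sum_congr rfl fun b _ => by rw [hK]; ring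
  have hright : ∑ a, v a * ∑ b, K a b = ∑ a, ∑ b, K a b * v a := by
    simp only [Finset.mul_sum, mul_comm]
  rw [hright]
  simp only [mul_sub, Finset.sum_sub_distrib]
  rw [hswap]
  ring

lemma mul_pLaplacian (φ : V → ℝ) {i : V} (hμ : μ i ≠ 0) :
    μ i * pLaplacian μ ω p φ i = ∑ j, ω i j * |φ j - φ i| ^ (p - 2) * (φ j - φ i) := by
  rw [pLaplacian, ← mul_assoc, mul_one_div_cancel hμ, one_mul]

lemma hasDerivAt_gradEnergy_add_smul (hμ : ∀ a, μ a ≠ 0) (hωsym : ∀ a b, ω a b = ω b a)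
    (hp : 1 < p) (φ v : V → ℝ) :
    HasDerivAt (fun t : ℝ => gradEnergy ω p (φ + t • v))
      (-(p * ∑ a, μ a * v a * pLaplacian μ ω p φ a)) 0 := by
  set K : V → V → ℝ := fun a b => ω a b * |φ b - φ a| ^ (p - 2) * (φ b - φ a)
  have hK : ∀ a b, K b a = -K a b := fun a b => by
    simp only [K, hωsym b a, abs_sub_comm (φ a)]; ring
  have hterm (a b : V) : HasDerivAt (fun t : ℝ => ω a b * |(φ + t • v) b - (φ + t • v) a| ^ p)
      (p * (K a b * (v b - v a))) 0 := by
    have hlin := (hasDerivAt_mul_const (x := (0 : ℝ)) (v b - v a)).const_add (φ b - φ a)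
    have hcomp := ((hasDerivAt_abs_rpow (φ b - φ a) hp).comp_of_eq (x := 0) hlin
      (by ring)).const_mul (ω a b)
    have hfun : (fun t : ℝ => ω a b * |(φ + t • v) b - (φ + t • v) a| ^ p)
        = fun t => ω a b * ((fun x => |x| ^ p) ∘ fun x => φ b - φ a + x * (v b - v a)) t := by
      ext t
      simp only [Function.comp_apply, Pi.add_apply, Pi.smul_apply, smul_eq_mul]
      ring_nf
    rw [hfun]
    exact hcomp.congr_deriv (by simp only [K]; ring)
  refine ((HasDerivAt.fun_sum fun a _ => HasDerivAt.fun_sum fun b _ => hterm a b).const_mul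
    (1 / 2 : ℝ)).congr_deriv ?_
  have hΔ : ∑ a, μ a * v a * pLaplacian μ ω p φ a = ∑ a, v a * ∑ b, K a b :=
    Finset.sum_congr rfl fun a _ => by rw [mul_comm (μ a), mul_assoc, mul_pLaplacian φ (hμ a)]
  simp only [hΔ, ← Finset.mul_sum, sum_sum_mul_sub_of_antisymm_s12 K hK]
  ring

lemma hasDerivAt_powIntegral_add_smul (hq : 1 ≤ q) (φ v : V → ℝ) :
    HasDerivAt (fun t : ℝ => powIntegral μ f q (φ + t • v))
      (q * ∑ a, μ a * v a * (f a * φ a ^ (q - 1))) 0 := by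
  have hterm (a : V) : HasDerivAt (fun t : ℝ => μ a * (f a * (φ + t • v) a ^ q))
      (q * (μ a * v a * (f a * φ a ^ (q - 1)))) 0 := by
    have hlin := (hasDerivAt_mul_const (x := (0 : ℝ)) (v a)).const_add (φ a)
    refine (((hlin.rpow_const (Or.inr hq)).const_mul (f a)).const_mul (μ a)).congr_deriv ?_
    simp only [zero_mul, add_zero]
    ring
  refine (HasDerivAt.fun_sum fun a _ => hterm a).congr_deriv ?_
  rw [Finset.mul_sum]

lemma hasDerivAt_energy_add_smul (hμ : ∀ a, μ a ≠ 0) (hωsym : ∀ a b, ω a b = ω b a)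
    (hp : 1 < p) (hα : 1 ≤ α) {φ : V → ℝ} (hφ : powIntegral μ f α φ = 1) (v : V → ℝ) :
    HasDerivAt (fun t : ℝ => energy μ ω h f p α (φ + t • v))
      (-(p * ∑ a, μ a * v a * (pLaplacian μ ω p φ a + h a * φ a ^ (p - 1) +
        energy μ ω h f p α φ * f a * φ a ^ (α - 1)))) 0 := by
  have hN := (hasDerivAt_gradEnergy_add_smul hμ hωsym hp φ v).sub
    (hasDerivAt_powIntegral_add_smul (μ := μ) (f := h) hp.le φ v)
  have hD := (hasDerivAt_powIntegral_add_smul (μ := μ) (f := f) hα φ v).rpow_const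
    (p := -(p / α)) (Or.inl (by simp [hφ]))
  have hα0 : α ≠ 0 := by linarith
  set E := energy μ ω h f p α φ
  have hsplit : ∑ a, μ a * v a * (pLaplacian μ ω p φ a + h a * φ a ^ (p - 1) +
      E * f a * φ a ^ (α - 1)) = ∑ a, μ a * v a * pLaplacian μ ω p φ a +
      ∑ a, μ a * v a * (h a * φ a ^ (p - 1)) + E * ∑ a, μ a * v a * (f a * φ a ^ (α - 1)) := by
    rw [Finset.mul_sum, ← Finset.sum_add_distrib, ← Finset.sum_add_distrib]
    exact Finset.sum_congr rfl fun a _ => by ring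
  have hE : E = gradEnergy ω p φ - powIntegral μ h p φ := energy_eq_energyNumerator hφ
  refine (hN.mul hD).congr_deriv ?_
  rw [hsplit]
  simp only [Pi.sub_apply, zero_smul, add_zero, hφ, Real.one_rpow, mul_one, ← hE]
  field_simp
  ring

lemma exists_isLeast_energy [Nonempty V] (hμ : ∀ i, 0 < μ i) (hf : ∀ i, 0 < f i) (hp : 0 ≤ p)
    (hα : 0 < α) : ∃ φ ∈ normalizedNonneg μ f α,
      IsLeast (admissibleEnergies μ ω h f p α) (energy μ ω h f p α φ) := by
  obtain ⟨φ, ⟨hφ, hD⟩, hmin⟩ := (isCompact_normalizedNonneg hμ hf hα).exists_isMinOn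
    (normalizedNonneg_nonempty hμ hf hα.ne') (continuous_energyNumerator hp).continuousOn
  have hφ0 : φ ≠ 0 := by
    rintro rfl
    rw [powIntegral_zero hα.ne'] at hD
    exact zero_ne_one hD
  refine ⟨φ, ⟨hφ, hD⟩, ⟨φ, hφ, hφ0, rfl⟩, ?_⟩
  rintro _ ⟨ψ, hψ, hψ0, rfl⟩
  have hψD := powIntegral_pos (q := α) hμ hf hψ hψ0
  rw [energy_eq_energyNumerator hD, ← energyNumerator_normalizeMass hψ hψD]
  exact hmin (normalizeMass_mem_normalizedNonneg hα.ne' hψ hψD)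

lemma pLaplacian_pos_of_eq_zero {i j : V} (hμ : 0 < μ i) (hω : ∀ k, 0 ≤ ω i k)
    (hφ : ∀ k, 0 ≤ φ k) (hi : φ i = 0) (hij : 0 < ω i j) (hj : 0 < φ j) :
    0 < pLaplacian μ ω p φ i := by
  refine mul_pos (one_div_pos.2 hμ) (Finset.sum_pos' (fun k _ => ?_) ⟨j, Finset.mem_univ j, ?_⟩)
  · have := hω k; have := hφ k; simp only [hi, sub_zero]; positivity
  · simp only [hi, sub_zero]; positivity

/-- Stated with `0 • _` on the left to match `g 0` for `g t = energy (φ + t • Pi.single i 1)`. -/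
lemma energy_le_energy_add_single [DecidableEq V]
    (hleast : IsLeast (admissibleEnergies μ ω h f p α) (energy μ ω h f p α φ))
    (hφ : ∀ j, 0 ≤ φ j) {i : V} {t : ℝ} (ht : 0 < φ i + t) :
    energy μ ω h f p α (φ + (0 : ℝ) • Pi.single i 1) ≤
      energy μ ω h f p α (φ + t • Pi.single i 1) := by
  rw [zero_smul, add_zero]
  refine hleast.2 ⟨_, fun j => ?_, fun h0 => ?_, rfl⟩
  · rcases eq_or_ne j i with rfl | hj
    · simpa using ht.le
    · simpa [hj] using hφ j
  · have := congrFun h0 i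
    simp only [Pi.add_apply, Pi.smul_apply, Pi.single_eq_same, smul_eq_mul, mul_one,
      Pi.zero_apply] at this
    linarith

lemma hasDerivAt_energy_add_single [DecidableEq V] (hμ : ∀ a, μ a ≠ 0)
    (hωsym : ∀ a b, ω a b = ω b a) (hp : 1 < p) (hα : 1 ≤ α) (hφ : powIntegral μ f α φ = 1) (i : V) :
    HasDerivAt (fun t : ℝ => energy μ ω h f p α (φ + t • Pi.single i 1))
      (-(p * μ i * (pLaplacian μ ω p φ i + h i * φ i ^ (p - 1) +
        energy μ ω h f p α φ * f i * φ i ^ (α - 1)))) 0 := by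
  convert hasDerivAt_energy_add_smul (h := h) hμ hωsym hp hα hφ (Pi.single i 1) using 1
  simp [Pi.single_apply, mul_assoc]

/-- At a zero `i` of a minimizer only increases of `φ i` are admissible, so the derivative
`-p μ_i Δ_p φ_i` of the energy in that direction is nonnegative; a positive neighbour would
make `Δ_p φ_i` positive. -/
lemma eq_zero_of_adj_of_isLeast (hμ : ∀ a, 0 < μ a) (hωsym : ∀ a b, ω a b = ω b a)
    (hω : ∀ a b, 0 ≤ ω a b) (hp : 1 < p) (hα : 1 < α) (hφ : φ ∈ normalizedNonneg μ f α)
    (hleast : IsLeast (admissibleEnergies μ ω h f p α) (energy μ ω h f p α φ)) {i j : V}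
    (hi : φ i = 0) (hij : 0 < ω i j) : φ j = 0 := by
  classical
  by_contra hj
  have hΔ := pLaplacian_pos_of_eq_zero (p := p) (hμ i) (hω i) hφ.1 hi hij
    ((hφ.1 j).lt_of_ne' hj)
  have hc := (hasDerivAt_energy_add_single (h := h) (fun a => (hμ a).ne') hωsym hp hα.le hφ.2
    i).nonneg_of_forall_gt_le fun t ht =>
      energy_le_energy_add_single hleast hφ.1 (by rwa [hi, zero_add])
  rw [hi, Real.zero_rpow (by linarith), Real.zero_rpow (by linarith)] at hc
  have hpμ : 0 < p * μ i := mul_pos (by linarith) (hμ i)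
  linarith [mul_pos hpμ hΔ]

lemma pos_of_isLeast (hμ : ∀ a, 0 < μ a) (hωsym : ∀ a b, ω a b = ω b a)
    (hω : ∀ a b, 0 ≤ ω a b) (hconn : ∀ i j : V, Relation.ReflTransGen (fun a b => 0 < ω a b) i j)
    (hp : 1 < p) (hα : 1 < α) (hφ : φ ∈ normalizedNonneg μ f α)
    (hleast : IsLeast (admissibleEnergies μ ω h f p α) (energy μ ω h f p α φ)) (i : V) :
    0 < φ i := by
  refine (hφ.1 i).lt_of_ne' fun hi => ?_
  have hzero : φ = 0 := funext fun j => by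
    induction hconn i j with
    | refl => exact hi
    | tail _ hadj ih => exact eq_zero_of_adj_of_isLeast hμ hωsym hω hp hα hφ hleast ih hadj
  have hD := hφ.2
  rw [hzero, powIntegral_zero (by linarith)] at hD
  exact zero_ne_one hD

lemma pLaplacian_add_eq_zero_of_isLeast (hμ : ∀ a, 0 < μ a) (hωsym : ∀ a b, ω a b = ω b a)
    (hp : 1 < p) (hα : 1 ≤ α) (hφ : φ ∈ normalizedNonneg μ f α)
    (hleast : IsLeast (admissibleEnergies μ ω h f p α) (energy μ ω h f p α φ)) {i : V}
    (hi : 0 < φ i) :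
    pLaplacian μ ω p φ i + h i * φ i ^ (p - 1) +
      energy μ ω h f p α φ * f i * φ i ^ (α - 1) = 0 := by
  classical
  have hmin : IsLocalMin (fun t : ℝ => energy μ ω h f p α (φ + t • Pi.single i 1)) 0 := by
    filter_upwards [Ioi_mem_nhds (neg_lt_zero.2 hi)] with t ht
    exact energy_le_energy_add_single hleast hφ.1 (by linarith [Set.mem_Ioi.1 ht])
  have hderiv := hmin.hasDerivAt_eq_zero
    (hasDerivAt_energy_add_single (fun a => (hμ a).ne') hωsym hp hα hφ.2 i)
  have hpμ : p * μ i ≠ 0 := mul_ne_zero (by linarith) (hμ i).ne'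
  simpa [hpμ] using hderiv

end

theorem yamabe_solution_with_lambda_neg_beta_general
    {V : Type*} [Fintype V] [Nonempty V]
    (μ : V → ℝ) (hμ : ∀ i, 0 < μ i)
    (ω : V → V → ℝ) (hωsym : ∀ i j, ω i j = ω j i)
    (hωnonneg : ∀ i j, 0 ≤ ω i j)
    (hconn : ∀ i j : V, Relation.ReflTransGen (fun a b => 0 < ω a b) i j)
    (h f : V → ℝ) (hf : ∀ i, 0 < f i)
    (p α : ℝ) (hp : 1 < p) (hpα : p ≤ α)
    (β : ℝ)
    (hβ : β = sInf {y : ℝ | ∃ φ : V → ℝ, (∀ i, 0 ≤ φ i) ∧ φ ≠ 0 ∧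
      energy μ ω h f p α φ = y}) :
    ∃ φhat : V → ℝ, (∀ i, 0 < φhat i) ∧
      (∑ i, μ i * (f i * φhat i ^ α) = 1) ∧
      ∀ i, pLaplacian μ ω p φhat i + h i * φhat i ^ (p - 1) =
        -β * f i * φhat i ^ (α - 1) := by
  have hα : 1 < α := hp.trans_le hpα
  obtain ⟨φ, hφ, hleast⟩ := exists_isLeast_energy (ω := ω) (h := h) hμ hf (p := p) (α := α)
    (by linarith) (by linarith)
  have hβφ : energy μ ω h f p α φ = β := hβ ▸ hleast.csInf_eq.symm
  have hpos := pos_of_isLeast hμ hωsym hωnonneg hconn hp hα hφ hleast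
  refine ⟨φ, hpos, hφ.2, fun i => ?_⟩
  have hEL := pLaplacian_add_eq_zero_of_isLeast hμ hωsym hp hα.le hφ hleast (hpos i)
  rw [hβφ] at hEL
  linarith

/-- On a finite connected graph there is a normalized, everywhere positive
minimizer `φ̂` of the energy functional, with `∫_V f φ̂^α dμ = 1`, solving the
`p`-th Yamabe equation `Δ_p φ̂ + h φ̂^{p−1} = −β f φ̂^{α−1}` where
`β = inf {I(φ) : φ ≥ 0, φ ≢ 0}`. -/
theorem yamabe_solution_with_lambda_neg_beta
    {V : Type*} [Fintype V] [Nonempty V]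
    (μ : V → ℝ) (hμ : ∀ i, 0 < μ i)
    (ω : V → V → ℝ) (hωsym : ∀ i j, ω i j = ω j i)
    (hωnonneg : ∀ i j, 0 ≤ ω i j) (hωloop : ∀ i, ω i i = 0)
    (hconn : ∀ i j : V, Relation.ReflTransGen (fun a b => 0 < ω a b) i j)
    (h f : V → ℝ) (hf : ∀ i, 0 < f i)
    (p α : ℝ) (hp : 1 < p) (hpα : p ≤ α)
    (β : ℝ)
    (hβ : β = sInf {y : ℝ | ∃ φ : V → ℝ, (∀ i, 0 ≤ φ i) ∧ φ ≠ 0 ∧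
      energy μ ω h f p α φ = y}) :
    ∃ φhat : V → ℝ, (∀ i, 0 < φhat i) ∧
      (∑ i, μ i * (f i * φhat i ^ α) = 1) ∧
      ∀ i, pLaplacian μ ω p φhat i + h i * φhat i ^ (p - 1) =
        -β * f i * φhat i ^ (α - 1) :=
  yamabe_solution_with_lambda_neg_beta_general μ hμ ω hωsym hωnonneg hconn h f hf p α hp hpα β hβ
end
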